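/- Let (a_1,…,a_m) be a telescopic sequence and, for 2 ≤ i ≤ m, let (l_{i1},…,l_{im}) be the unique element of B(A_m) with Σ_{j=1}^m a_j l_{ij} = a_i·d_{i−1}/d_i. Then l_{ij} = 0 for all j ≥ i. -/

import Mathlib

/-- `dseq a i = gcd(a_1, …, a_i)`. -/
def dseq (a : ℕ → ℕ) (i : ℕ) : ℕ := (Finset.Icc 1 i).gcd a

/-- The telescopic condition:
`a_i/d_i ∈ (a_1/d_{i-1})ℤ_{≥0} + ⋯ + (a_{i-1}/d_{i-1})ℤ_{≥0}` for `2 ≤ i ≤ m`. -/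
def Telescopic (m : ℕ) (a : ℕ → ℕ) : Prop :=
  ∀ i, 2 ≤ i → i ≤ m →
    ∃ k : ℕ → ℕ,
      a i / dseq a i = ∑ j ∈ Finset.Icc 1 (i - 1), (a j / dseq a (i - 1)) * k j

/-- Membership in `B(A_m)`: `0 ≤ l_i ≤ d_{i-1}/d_i - 1` for `2 ≤ i ≤ m`
(`l_1` is unrestricted). -/
def InB (m : ℕ) (a : ℕ → ℕ) (l : ℕ → ℕ) : Prop :=
  ∀ i, 2 ≤ i → i ≤ m → l i ≤ dseq a (i - 1) / dseq a i - 1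

/-!
Let `n ≥ i` be the largest index with `l_n ≠ 0`. Every `a_j` with `j < n` is a multiple of
`d_{n-1}`, and so is `a_i d_{i-1}/d_i = (a_i/d_i) d_{i-1}`; hence `d_{n-1} ∣ a_n l_n`. Since
`gcd(a_n, d_{n-1}) = d_n`, this forces `d_{n-1}/d_n ∣ l_n`, which is impossible for
`0 < l_n < d_{n-1}/d_n`.
-/

open Finset

theorem Nat.eq_zero_of_dvd_mul_of_le_div_gcd_sub_one {x D l : ℕ} (h : D ∣ x * l)
    (hl : l ≤ D / Nat.gcd x D - 1) : l = 0 := by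
  rcases D.eq_zero_or_pos with rfl | hD
  · simpa using hl
  have hg : 0 < Nat.gcd x D := Nat.gcd_pos_of_pos_right x hD
  have hdvd : D / Nat.gcd x D ∣ x / Nat.gcd x D * l := by
    refine (Nat.mul_dvd_mul_iff_left hg).mp ?_
    rwa [Nat.mul_div_cancel' (Nat.gcd_dvd_right x D), ← mul_assoc,
      Nat.mul_div_cancel' (Nat.gcd_dvd_left x D)]
  have hpos : 0 < D / Nat.gcd x D := Nat.div_pos (Nat.le_of_dvd hD (Nat.gcd_dvd_right x D)) hg
  exact Nat.eq_zero_of_dvd_of_lt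
    ((Nat.coprime_div_gcd_div_gcd hg).symm.dvd_of_dvd_mul_left hdvd) (by omega)

section

variable {a : ℕ → ℕ}

theorem dseq_dvd {n k : ℕ} (hk : 1 ≤ k) (hkn : k ≤ n) : dseq a n ∣ a k :=
  Finset.gcd_dvd (mem_Icc.mpr ⟨hk, hkn⟩)

theorem dseq_dvd_dseq {j k : ℕ} (hjk : j ≤ k) : dseq a k ∣ dseq a j :=
  Finset.gcd_mono (Icc_subset_Icc_right hjk)

theorem dseq_succ (n : ℕ) : dseq a (n + 1) = Nat.gcd (a (n + 1)) (dseq a n) := by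
  rw [dseq, ← insert_Icc_right_eq_Icc_add_one (by omega), Finset.gcd_insert]
  rfl

theorem dseq_pred_dvd_mul_div {i : ℕ} (hi : 1 ≤ i) :
    dseq a (i - 1) ∣ a i * (dseq a (i - 1) / dseq a i) := by
  obtain ⟨p, hp⟩ := dseq_dvd (a := a) hi le_rfl
  rw [hp, mul_comm (dseq a i), mul_assoc, Nat.mul_div_cancel' (dseq_dvd_dseq (Nat.sub_le i 1))]
  exact dvd_mul_left _ _

theorem dseq_dvd_mul_of_dvd_sum {m n : ℕ} {l : ℕ → ℕ} (hnm : n + 1 ≤ m)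
    (hzero : ∀ j, n + 1 < j → j ≤ m → l j = 0)
    (h : dseq a n ∣ ∑ j ∈ Icc 1 m, a j * l j) : dseq a n ∣ a (n + 1) * l (n + 1) := by
  have hsum :
      ∑ j ∈ Icc 1 m, a j * l j = ∑ j ∈ Icc 1 n, a j * l j + a (n + 1) * l (n + 1) := by
    rw [← sum_Icc_succ_top (by omega)]
    refine (sum_subset (Icc_subset_Icc_right hnm) fun j hj hj' => ?_).symm
    simp only [mem_Icc] at hj hj'
    rw [hzero j (by omega) hj.2, mul_zero]
  have hpartial : dseq a n ∣ ∑ j ∈ Icc 1 n, a j * l j :=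
    dvd_sum fun j hj => (dseq_dvd (mem_Icc.mp hj).1 (mem_Icc.mp hj).2).mul_right _
  rw [hsum] at h
  exact (Nat.dvd_add_right hpartial).mp h

end

theorem telescopic_representative_vanishes_general
    (m : ℕ) (a : ℕ → ℕ)
    (i : ℕ) (hi2 : 2 ≤ i)
    (l : ℕ → ℕ) (hB : InB m a l)
    (hsum : ∑ j ∈ Finset.Icc 1 m, a j * l j = a i * (dseq a (i - 1) / dseq a i)) :
    ∀ j, i ≤ j → j ≤ m → l j = 0 := by
  by_contra! hex
  obtain ⟨n, ⟨hin, hnm, hn⟩, hmax⟩ :=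
    BddAbove.exists_isGreatest_of_nonempty (S := {k | i ≤ k ∧ k ≤ m ∧ l k ≠ 0})
      ⟨m, fun k hk => hk.2.1⟩ hex
  obtain ⟨n, rfl⟩ : ∃ k, n = k + 1 := ⟨n - 1, by omega⟩
  have hzero : ∀ k, n + 1 < k → k ≤ m → l k = 0 := fun k hk hkm =>
    by_contra fun hlk => (hmax ⟨by omega, hkm, hlk⟩).not_gt hk
  have hdvd : dseq a n ∣ a (n + 1) * l (n + 1) := by
    refine dseq_dvd_mul_of_dvd_sum hnm hzero ?_
    rw [hsum]
    exact (dseq_dvd_dseq (by omega)).trans (dseq_pred_dvd_mul_div (by omega))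
  have hbound := hB (n + 1) (by omega) hnm
  rw [Nat.add_sub_cancel, dseq_succ] at hbound
  exact hn (Nat.eq_zero_of_dvd_mul_of_le_div_gcd_sub_one hdvd hbound)

/-- If `(l_{i1},…,l_{im}) ∈ B(A_m)` represents `a_i · d_{i-1}/d_i`, i.e.
`∑_{j=1}^m a_j l_{ij} = a_i d_{i-1}/d_i`, then `l_{ij} = 0` for all `j ≥ i`. -/
theorem telescopic_representative_vanishes
    (m : ℕ) (hm : 2 ≤ m) (a : ℕ → ℕ)
    (hpos : ∀ i, 1 ≤ i → i ≤ m → 0 < a i)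
    (hgcd : (Finset.Icc 1 m).gcd a = 1)
    (htel : Telescopic m a)
    (i : ℕ) (hi2 : 2 ≤ i) (him : i ≤ m)
    (l : ℕ → ℕ) (hB : InB m a l)
    (hsum : ∑ j ∈ Finset.Icc 1 m, a j * l j = a i * (dseq a (i - 1) / dseq a i)) :
    ∀ j, i ≤ j → j ≤ m → l j = 0 :=
  telescopic_representative_vanishes_general m a i hi2 l hB hsum
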